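/- Let φ: 𝔼_2 → 𝔼_2 be a continuous sequential endomorphism with φ(I) = I, let c ≥ 0 be a real number, and assume φ(λA) = λ^c φ(A) for all λ ∈ [0,1] and A ∈ 𝔼_2. Define Φ: ℙ_2 → ℙ_2 by Φ(A) = ‖A‖^c · φ(A / ‖A‖), where ‖·‖ denotes the operator (spectral) norm. Then Φ is a Jordan triple endomorphism of ℙ_2, i.e., Φ(ABA) = Φ(A)Φ(B)Φ(A) for all A, B ∈ ℙ_2, and Φ(A) = φ(A) for every invertible A ∈ 𝔼_2. -/

import Mathlib

open Matrix ComplexOrder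

/-- A 2×2 effect: positive semidefinite and below the identity in the Loewner order. -/
def IsEffect2 (A : Matrix (Fin 2) (Fin 2) ℂ) : Prop :=
  A.PosSemidef ∧ (1 - A).PosSemidef

/-- The operator (spectral) norm of a 2×2 complex matrix. -/
noncomputable def opNorm2 (A : Matrix (Fin 2) (Fin 2) ℂ) : ℝ :=
  ‖(Matrix.toEuclideanCLM (𝕜 := ℂ) A :
      EuclideanSpace ℂ (Fin 2) →L[ℂ] EuclideanSpace ℂ (Fin 2))‖

/-- The positive semidefinite square root of a positive semidefinite matrix
(the definition `Matrix.PosSemidef.sqrt` of the older Mathlib, since removed). -/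
noncomputable def Matrix.PosSemidef.sqrt {n : Type*} [Fintype n] [DecidableEq n]
    {A : Matrix n n ℂ} (hA : A.PosSemidef) : Matrix n n ℂ :=
  hA.1.eigenvectorUnitary.1 * diagonal ((↑) ∘ (√·) ∘ hA.1.eigenvalues) *
  (star hA.1.eigenvectorUnitary : Matrix n n ℂ)

open scoped MatrixOrder in
lemma Matrix.PosSemidef.sqrt_eq_cfc' {A : Matrix (Fin 2) (Fin 2) ℂ} (hA : A.PosSemidef) :
    hA.sqrt = CFC.sqrt A := by
  rw [CFC.sqrt_eq_cfc, cfc_nnreal_eq_real _ A hA.nonneg, hA.1.cfc_eq]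
  simp only [IsHermitian.cfc, Unitary.conjStarAlgAut_apply, Matrix.PosSemidef.sqrt]
  congr 3
  funext x
  simp only [Function.comp_apply]
  rw [Real.sqrt]
  rfl

open scoped MatrixOrder in
lemma Matrix.PosSemidef.sqrt_mul_self {A : Matrix (Fin 2) (Fin 2) ℂ} (hA : A.PosSemidef) :
    hA.sqrt * hA.sqrt = A := by
  rw [hA.sqrt_eq_cfc']
  exact CFC.sqrt_mul_sqrt_self A hA.nonneg

open scoped MatrixOrder in
lemma Matrix.PosSemidef.posSemidef_sqrt {A : Matrix (Fin 2) (Fin 2) ℂ} (hA : A.PosSemidef) :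
    hA.sqrt.PosSemidef := by
  rw [hA.sqrt_eq_cfc']
  exact (CFC.sqrt_nonneg A).posSemidef

open scoped MatrixOrder in
lemma Matrix.PosSemidef.eq_sqrt_of_sq_eq {A B : Matrix (Fin 2) (Fin 2) ℂ} (hA : A.PosSemidef)
    (hB : B.PosSemidef) (h : A ^ 2 = B) : A = hB.sqrt := by
  rw [hB.sqrt_eq_cfc']
  exact (CFC.sqrt_unique (a := B) (b := A) (by rw [← h, pow_two]) hA.nonneg).symm

set_option synthInstance.maxHeartbeats 1000000
set_option maxHeartbeats 1000000
local notation "M2" => Matrix (Fin 2) (Fin 2) ℂ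

lemma opNorm2_pos {A : M2} (h : A ≠ 0) : 0 < opNorm2 A := by
  rw [opNorm2]
  refine norm_pos_iff.mpr fun h0 => h ?_
  have := map_zero (Matrix.toEuclideanCLM (𝕜 := ℂ) (n := Fin 2))
  exact (Matrix.toEuclideanCLM (𝕜 := ℂ) (n := Fin 2)).injective (h0.trans this.symm)

lemma real_smul_eq (r : ℝ) (A : M2) : r • A = (r : ℂ) • A := by
  ext i j; simp [Matrix.smul_apply, Complex.real_smul]

lemma opNorm2_smul (r : ℝ) (hr : 0 ≤ r) (A : M2) : opNorm2 (r • A) = r * opNorm2 A := by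
  rw [opNorm2, opNorm2, real_smul_eq, _root_.map_smul]
  rw [norm_smul ((r:ℂ)) (Matrix.toEuclideanCLM (𝕜 := ℂ) A)]
  simp [abs_of_nonneg hr]

lemma opNorm2_nonneg (A : M2) : 0 ≤ opNorm2 A := norm_nonneg _

lemma opNorm2_mul_le (A B : M2) : opNorm2 (A * B) ≤ opNorm2 A * opNorm2 B := by
  rw [opNorm2, opNorm2, opNorm2, _root_.map_mul]
  exact ContinuousLinearMap.opNorm_comp_le _ _

open scoped InnerProductSpace in
lemma inner_toEuclideanCLM (A : M2) (x : EuclideanSpace ℂ (Fin 2)) :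
    star (WithLp.equiv 2 _ x) ⬝ᵥ (A *ᵥ (WithLp.equiv 2 _ x)) =
      ⟪x, (Matrix.toEuclideanCLM (𝕜 := ℂ) A) x⟫_ℂ := by
  have h : (Matrix.toEuclideanCLM (𝕜 := ℂ) A) x =
      (WithLp.equiv 2 _).symm (A *ᵥ (WithLp.equiv 2 _ x)) := by
    apply (WithLp.equiv 2 _).injective
    simp [Matrix.toLin'_apply]
  rw [h]
  simp [PiLp.inner_apply, dotProduct, RCLike.inner_apply, mul_comm]

lemma isHermitian_real_smul {A : M2} (hA : A.IsHermitian) (r : ℝ) : (r • A).IsHermitian := by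
  rw [real_smul_eq, Matrix.IsHermitian, conjTranspose_smul, hA.eq]
  simp

lemma posSemidef_real_smul {A : M2} (hA : A.PosSemidef) {r : ℝ} (hr : 0 ≤ r) :
    (r • A).PosSemidef := by
  refine Matrix.PosSemidef.of_dotProduct_mulVec_nonneg (isHermitian_real_smul hA.1 r) fun x => ?_
  rw [real_smul_eq, smul_mulVec, dotProduct_smul, smul_eq_mul]
  exact mul_nonneg (by exact_mod_cast Complex.zero_le_real.mpr hr) (hA.dotProduct_mulVec_nonneg x)

lemma posDef_real_smul {A : M2} (hA : A.PosDef) {r : ℝ} (hr : 0 < r) :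
    (r • A).PosDef := by
  refine Matrix.PosDef.of_dotProduct_mulVec_pos (isHermitian_real_smul hA.1 r) fun x hx => ?_
  rw [real_smul_eq, smul_mulVec, dotProduct_smul, smul_eq_mul]
  exact mul_pos (by exact_mod_cast Complex.zero_lt_real.mpr hr) (hA.dotProduct_mulVec_pos hx)

lemma posDef_of_isUnit {A : M2} (hA : A.PosSemidef) (hu : IsUnit A) : A.PosDef := by
  refine Matrix.PosDef.of_dotProduct_mulVec_pos hA.1 fun x hx => ?_
  set S := hA.sqrt with hS
  have hs : S * S = A := hA.sqrt_mul_self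
  have hSH : Sᴴ = S := hA.posSemidef_sqrt.1
  have key : star x ⬝ᵥ (A *ᵥ x) = star (S *ᵥ x) ⬝ᵥ (S *ᵥ x) := by
    rw [star_mulVec, hSH, ← hs, ← mulVec_mulVec, dotProduct_mulVec]
  rw [key]
  rw [dotProduct_star_self_pos_iff]
  intro h0
  have hSu : IsUnit S := by
    have : IsUnit A.det := (isUnit_iff_isUnit_det A).mp hu
    rw [← hs, det_mul] at this
    exact (isUnit_iff_isUnit_det S).mpr (isUnit_of_mul_isUnit_left this)
  apply hx
  have := (mulVec_injective_iff_isUnit.mpr hSu) (a₁ := x) (a₂ := 0)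
  simpa [h0] using this

open scoped InnerProductSpace in
lemma quad_eq (A : M2) (x : Fin 2 → ℂ) :
    star x ⬝ᵥ (A *ᵥ x) = ⟪(WithLp.equiv 2 (Fin 2 → ℂ)).symm x,
      (Matrix.toEuclideanCLM (𝕜 := ℂ) A) ((WithLp.equiv 2 (Fin 2 → ℂ)).symm x)⟫_ℂ := by
  have := inner_toEuclideanCLM A ((WithLp.equiv 2 (Fin 2 → ℂ)).symm x)
  simpa using this

open scoped InnerProductSpace in
lemma quad_one (x : Fin 2 → ℂ) :
    star x ⬝ᵥ x = ((‖(WithLp.equiv 2 (Fin 2 → ℂ)).symm x‖ ^ 2 : ℝ) : ℂ) := by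
  have := quad_eq 1 x
  rw [one_mulVec] at this
  rw [this, _root_.map_one, ContinuousLinearMap.one_apply,
    inner_self_eq_norm_sq_to_K]
  norm_cast

lemma sub_sq_posSemidef {A : M2} (hA : IsEffect2 A) : (A - A * A).PosSemidef := by
  have h := hA.2.conjTranspose_mul_mul_same hA.1.sqrt
  rw [hA.1.posSemidef_sqrt.1] at h
  obtain ⟨S, hs, hh⟩ : ∃ S : M2, S * S = A ∧ (S * (1 - A) * S).PosSemidef :=
    ⟨_, hA.1.sqrt_mul_self, h⟩
  have e : A - A * A = S * (1 - A) * S := by rw [← hs]; noncomm_ring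
  exact e ▸ hh

open scoped InnerProductSpace in
lemma effect_opNorm_le_one {A : M2} (hA : IsEffect2 A) : opNorm2 A ≤ 1 := by
  rw [opNorm2]
  refine ContinuousLinearMap.opNorm_le_bound _ zero_le_one fun xE => ?_
  rw [one_mul]
  set f := Matrix.toEuclideanCLM (𝕜 := ℂ) A with hf
  set x : Fin 2 → ℂ := WithLp.equiv 2 _ xE with hx
  have hsymm : (WithLp.equiv 2 (Fin 2 → ℂ)).symm x = xE := by simp [hx]
  have hstar : star f = f := by
    rw [hf, ← map_star]
    congr 1
    rw [Matrix.star_eq_conjTranspose, hA.1.1]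
  have hAA : star x ⬝ᵥ ((A * A) *ᵥ x) = ((‖f xE‖ ^ 2 : ℝ) : ℂ) := by
    rw [quad_eq, hsymm, _root_.map_mul, ContinuousLinearMap.mul_apply, ← hf]
    rw [← ContinuousLinearMap.adjoint_inner_left f (f xE) xE,
      ← ContinuousLinearMap.star_eq_adjoint, hstar, inner_self_eq_norm_sq_to_K]
    norm_cast
  have h1 : 0 ≤ star x ⬝ᵥ ((A - A * A) *ᵥ x) := (sub_sq_posSemidef hA).dotProduct_mulVec_nonneg x
  have h2 : 0 ≤ star x ⬝ᵥ ((1 - A) *ᵥ x) := hA.2.dotProduct_mulVec_nonneg x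
  rw [sub_mulVec, dotProduct_sub, sub_nonneg] at h1
  rw [sub_mulVec, one_mulVec, dotProduct_sub, sub_nonneg] at h2
  have hchain : ((‖f xE‖ ^ 2 : ℝ) : ℂ) ≤ ((‖xE‖ ^ 2 : ℝ) : ℂ) := by
    rw [← hAA, ← hsymm, ← quad_one]
    exact le_trans h1 h2
  rw [Complex.real_le_real] at hchain
  nlinarith [norm_nonneg (f xE), norm_nonneg xE, sq_nonneg (‖f xE‖ - ‖xE‖), sq_nonneg (‖f xE‖ + ‖xE‖)]

open scoped InnerProductSpace in
lemma posSemidef_one_sub {A : M2} (hA : A.PosSemidef) (h : opNorm2 A ≤ 1) :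
    (1 - A).PosSemidef := by
  refine Matrix.PosSemidef.of_dotProduct_mulVec_nonneg ?_ fun x => ?_
  · rw [Matrix.IsHermitian, conjTranspose_sub, conjTranspose_one, hA.1.eq]
  · set f := Matrix.toEuclideanCLM (𝕜 := ℂ) A with hf
    set xE := (WithLp.equiv 2 (Fin 2 → ℂ)).symm x with hxE
    have hq : star x ⬝ᵥ (A *ᵥ x) = ⟪xE, f xE⟫_ℂ := quad_eq A x
    have h0 := hA.dotProduct_mulVec_nonneg x
    rw [hq] at h0
    have him : (⟪xE, f xE⟫_ℂ).im = 0 := by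
      have := (Complex.le_def.mp h0).2
      simpa using this.symm
    have hre : (⟪xE, f xE⟫_ℂ).re ≤ ‖xE‖ ^ 2 := by
      calc (⟪xE, f xE⟫_ℂ).re ≤ ‖⟪xE, f xE⟫_ℂ‖ := Complex.re_le_norm _
        _ = ‖⟪xE, f xE⟫_ℂ‖ := rfl
        _ ≤ ‖xE‖ * ‖f xE‖ := norm_inner_le_norm _ _
        _ ≤ ‖xE‖ * (‖f‖ * ‖xE‖) :=
            mul_le_mul_of_nonneg_left (f.le_opNorm xE) (norm_nonneg _)
        _ ≤ ‖xE‖ * (1 * ‖xE‖) :=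
            mul_le_mul_of_nonneg_left
              (mul_le_mul_of_nonneg_right h (norm_nonneg _)) (norm_nonneg _)
        _ = ‖xE‖ ^ 2 := by ring
    rw [sub_mulVec, one_mulVec, dotProduct_sub, quad_one, hq, ← hxE]
    rw [Complex.le_def]
    refine ⟨?_, ?_⟩
    · simp only [Complex.zero_re, Complex.sub_re, Complex.ofReal_re]
      linarith [hre]
    · simp only [Complex.zero_im, Complex.sub_im, Complex.ofReal_im]
      linarith [him]

lemma isEffect_of_norm {A : M2} (hA : A.PosSemidef) (h : opNorm2 A ≤ 1) : IsEffect2 A :=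
  ⟨hA, posSemidef_one_sub hA h⟩

lemma isEffect_one : IsEffect2 (1 : M2) := ⟨Matrix.PosSemidef.one, by simpa using Matrix.PosSemidef.zero⟩

lemma isEffect_normalized {A : M2} (hA : A.PosSemidef) (h0 : A ≠ 0) :
    IsEffect2 ((opNorm2 A)⁻¹ • A) := by
  have hp := opNorm2_pos h0
  refine isEffect_of_norm (posSemidef_real_smul hA (inv_nonneg.mpr hp.le)) ?_
  rw [opNorm2_smul _ (inv_nonneg.mpr hp.le), inv_mul_cancel₀ hp.ne']

lemma sqrt_isUnit {A : M2} (hA : A.PosSemidef) (hu : IsUnit A) : IsUnit hA.sqrt := by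
  have : IsUnit A.det := (isUnit_iff_isUnit_det A).mp hu
  rw [← hA.sqrt_mul_self, det_mul] at this
  exact (isUnit_iff_isUnit_det _).mpr (isUnit_of_mul_isUnit_left this)

lemma posDef_ne_zero {A : M2} (h : A.PosDef) : A ≠ 0 := by
  intro h0
  have hd := h.det_pos
  rw [h0, Matrix.det_zero] at hd
  exact lt_irrefl 0 hd

lemma phi_posDef
    (φ : M2 → M2)
    (hmaps : ∀ A : M2, IsEffect2 A → IsEffect2 (φ A))
    (hseq : ∀ (A B : M2) (hA : IsEffect2 A) (hB : IsEffect2 B),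
      φ (hA.1.sqrt * B * hA.1.sqrt) = (hmaps A hA).1.sqrt * φ B * (hmaps A hA).1.sqrt)
    (hunital : φ 1 = 1) (c : ℝ)
    (hhom : ∀ lam : ℝ, lam ∈ Set.Icc (0 : ℝ) 1 → ∀ A : M2, IsEffect2 A →
        φ (lam • A) = (lam ^ c : ℝ) • φ A)
    {X : M2} (hX : X.PosDef) (heffX : IsEffect2 X) : (φ X).PosDef := by
  have hDpd : (X⁻¹).PosDef := hX.inv
  set μ : ℝ := max (opNorm2 X⁻¹) 1 with hμ
  have hμ1 : (1 : ℝ) ≤ μ := le_max_right _ _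
  have hμpos : (0 : ℝ) < μ := lt_of_lt_of_le one_pos hμ1
  set C : M2 := μ⁻¹ • X⁻¹ with hC
  have hCpsd : C.PosSemidef := posSemidef_real_smul hDpd.posSemidef (inv_nonneg.mpr hμpos.le)
  have hCnorm : opNorm2 C ≤ 1 := by
    rw [hC, opNorm2_smul _ (inv_nonneg.mpr hμpos.le)]
    calc μ⁻¹ * opNorm2 X⁻¹ ≤ μ⁻¹ * μ :=
          mul_le_mul_of_nonneg_left (le_max_left _ _) (inv_nonneg.mpr hμpos.le)
      _ = 1 := inv_mul_cancel₀ hμpos.ne'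
  have hCeff : IsEffect2 C := isEffect_of_norm hCpsd hCnorm
  have hSu : IsUnit heffX.1.sqrt := sqrt_isUnit heffX.1 hX.isUnit
  have hdS : IsUnit heffX.1.sqrt.det := (isUnit_iff_isUnit_det _).mp hSu
  obtain ⟨S, hSeq⟩ : ∃ S : M2, S = heffX.1.sqrt := ⟨_, rfl⟩
  have hs : S * S = X := by rw [hSeq]; exact heffX.1.sqrt_mul_self
  have hSd : IsUnit S.det := by rw [hSeq]; exact hdS
  have hSinv : S * X⁻¹ * S = 1 := by
    conv_lhs => rw [← hs]
    rw [Matrix.mul_inv_rev]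
    rw [show S * (S⁻¹ * S⁻¹) * S = (S * S⁻¹) * (S⁻¹ * S) by noncomm_ring]
    rw [mul_nonsing_inv _ hSd, nonsing_inv_mul _ hSd, one_mul]
  have harg : heffX.1.sqrt * C * heffX.1.sqrt = (μ⁻¹ : ℝ) • (1 : M2) := by
    rw [← hSeq, hC, Matrix.mul_smul, Matrix.smul_mul, hSinv]
  have happ := hseq X C heffX hCeff
  rw [harg, hhom μ⁻¹ ⟨inv_nonneg.mpr hμpos.le, inv_le_one_of_one_le₀ hμ1⟩ 1 isEffect_one,
    hunital] at happ
  have hrpos : (0 : ℝ) < μ⁻¹ ^ c := Real.rpow_pos_of_pos (inv_pos.mpr hμpos) c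
  have hunit : IsUnit ((μ⁻¹ ^ c : ℝ) • (1 : M2)) := by
    rw [real_smul_eq]
    refine (isUnit_iff_isUnit_det _).mpr ?_
    rw [det_smul, det_one, mul_one]
    simp only [Fintype.card_fin]
    refine IsUnit.pow _ (Ne.isUnit ?_)
    exact_mod_cast hrpos.ne'
  rw [happ] at hunit
  have hdet := (isUnit_iff_isUnit_det _).mp hunit
  rw [det_mul, det_mul] at hdet
  have hTu : IsUnit ((hmaps X heffX).1.sqrt).det :=
    isUnit_of_mul_isUnit_left (isUnit_of_mul_isUnit_left hdet)
  have : IsUnit (φ X) := by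
    rw [← (hmaps X heffX).1.sqrt_mul_self]
    exact ((isUnit_iff_isUnit_det _).mpr hTu).mul ((isUnit_iff_isUnit_det _).mpr hTu)
  exact posDef_of_isUnit (hmaps X heffX).1 this

lemma phi_triple
    (φ : M2 → M2)
    (hmaps : ∀ A : M2, IsEffect2 A → IsEffect2 (φ A))
    (hseq : ∀ (A B : M2) (hA : IsEffect2 A) (hB : IsEffect2 B),
      φ (hA.1.sqrt * B * hA.1.sqrt) = (hmaps A hA).1.sqrt * φ B * (hmaps A hA).1.sqrt)
    {A' B' : M2} (hA' : IsEffect2 A') (hB' : IsEffect2 B') :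
    φ (A' * B' * A') = φ A' * φ B' * φ A' := by
  have hXpsd : (A' * A').PosSemidef := by
    have h := Matrix.posSemidef_conjTranspose_mul_self A'
    rwa [hA'.1.1] at h
  have hXnorm : opNorm2 (A' * A') ≤ 1 :=
    le_trans (opNorm2_mul_le _ _)
      (mul_le_one₀ (effect_opNorm_le_one hA') (opNorm2_nonneg _) (effect_opNorm_le_one hA'))
  have heffX : IsEffect2 (A' * A') := isEffect_of_norm hXpsd hXnorm
  have hsX : heffX.1.sqrt = A' := by
    refine (hA'.1.eq_sqrt_of_sq_eq heffX.1 ?_).symm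
    rw [pow_two]
  have happ2 := hseq A' A' hA' hA'
  obtain ⟨S, hSeq⟩ : ∃ S : M2, S = hA'.1.sqrt := ⟨_, rfl⟩
  have hs : S * S = A' := by rw [hSeq]; exact hA'.1.sqrt_mul_self
  rw [← hSeq] at happ2
  have harg2 : S * A' * S = A' * A' := by rw [← hs]; noncomm_ring
  rw [harg2] at happ2
  obtain ⟨T, hTeq⟩ : ∃ T : M2, T = (hmaps A' hA').1.sqrt := ⟨_, rfl⟩
  have ht : T * T = φ A' := by rw [hTeq]; exact (hmaps A' hA').1.sqrt_mul_self
  rw [← hTeq] at happ2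
  have hφX : φ (A' * A') = φ A' * φ A' := by
    rw [happ2, ← ht]; noncomm_ring
  have hsφX : (hmaps _ heffX).1.sqrt = φ A' := by
    refine ((hmaps A' hA').1.eq_sqrt_of_sq_eq (hmaps _ heffX).1 ?_).symm
    rw [pow_two, hφX]
  have happ := hseq (A' * A') B' heffX hB'
  rw [hsX, hsφX] at happ
  exact happ

/-- Extension of a suitably homogeneous unital continuous sequential endomorphism of 𝔼₂
to a Jordan triple endomorphism Φ of ℙ₂ agreeing with φ on invertible effects. -/
theorem extension_to_jordan_triple_endo
    (φ : Matrix (Fin 2) (Fin 2) ℂ → Matrix (Fin 2) (Fin 2) ℂ)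
    (hmaps : ∀ A : Matrix (Fin 2) (Fin 2) ℂ, IsEffect2 A → IsEffect2 (φ A))
    (hcont : ContinuousOn φ {A : Matrix (Fin 2) (Fin 2) ℂ | IsEffect2 A})
    (hseq : ∀ (A B : Matrix (Fin 2) (Fin 2) ℂ) (hA : IsEffect2 A)
      (hB : IsEffect2 B),
      φ (hA.1.sqrt * B * hA.1.sqrt) =
        (hmaps A hA).1.sqrt * φ B * (hmaps A hA).1.sqrt)
    (hunital : φ 1 = 1)
    (c : ℝ) (hc : 0 ≤ c)
    (hhom : ∀ lam : ℝ, lam ∈ Set.Icc (0 : ℝ) 1 →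
      ∀ A : Matrix (Fin 2) (Fin 2) ℂ, IsEffect2 A →
        φ (lam • A) = (lam ^ c : ℝ) • φ A) :
    (∀ A : Matrix (Fin 2) (Fin 2) ℂ, A.PosDef →
      ((opNorm2 A ^ c : ℝ) • φ ((opNorm2 A)⁻¹ • A)).PosDef) ∧
    (∀ A B : Matrix (Fin 2) (Fin 2) ℂ, A.PosDef → B.PosDef →
      (opNorm2 (A * B * A) ^ c : ℝ) • φ ((opNorm2 (A * B * A))⁻¹ • (A * B * A)) =
        ((opNorm2 A ^ c : ℝ) • φ ((opNorm2 A)⁻¹ • A)) *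
          ((opNorm2 B ^ c : ℝ) • φ ((opNorm2 B)⁻¹ • B)) *
          ((opNorm2 A ^ c : ℝ) • φ ((opNorm2 A)⁻¹ • A))) ∧
    (∀ A : Matrix (Fin 2) (Fin 2) ℂ, IsEffect2 A → IsUnit A →
      (opNorm2 A ^ c : ℝ) • φ ((opNorm2 A)⁻¹ • A) = φ A) := by
  have main3 : ∀ X : M2, IsEffect2 X → X ≠ 0 →
      (opNorm2 X ^ c : ℝ) • φ ((opNorm2 X)⁻¹ • X) = φ X := by
    intro X hX h0
    have hp := opNorm2_pos h0
    have h := hhom (opNorm2 X) ⟨hp.le, effect_opNorm_le_one hX⟩ ((opNorm2 X)⁻¹ • X)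
      (isEffect_normalized hX.1 h0)
    rw [smul_inv_smul₀ hp.ne'] at h
    exact h.symm
  refine ⟨?_, ?_, ?_⟩
  · intro A hA
    have h0 : A ≠ 0 := posDef_ne_zero hA
    have hp := opNorm2_pos h0
    have heff := isEffect_normalized hA.posSemidef h0
    have hpd : ((opNorm2 A)⁻¹ • A).PosDef := posDef_real_smul hA (inv_pos.mpr hp)
    exact posDef_real_smul (phi_posDef φ hmaps hseq hunital c hhom hpd heff)
      (Real.rpow_pos_of_pos hp c)
  · intro A B hA hB
    have h0A : A ≠ 0 := posDef_ne_zero hA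
    have h0B : B ≠ 0 := posDef_ne_zero hB
    have hpa := opNorm2_pos h0A
    have hpb := opNorm2_pos h0B
    set a := opNorm2 A with ha
    set b := opNorm2 B with hb
    set A' : M2 := a⁻¹ • A with hA'
    set B' : M2 := b⁻¹ • B with hB'
    have heffA' : IsEffect2 A' := isEffect_normalized hA.posSemidef h0A
    have heffB' : IsEffect2 B' := isEffect_normalized hB.posSemidef h0B
    have hA'pd : A'.PosDef := posDef_real_smul hA (inv_pos.mpr hpa)
    have hB'pd : B'.PosDef := posDef_real_smul hB (inv_pos.mpr hpb)
    set W : M2 := A' * B' * A' with hW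
    have hWpsd : W.PosSemidef := by
      have h := heffB'.1.mul_mul_conjTranspose_same A'
      rwa [heffA'.1.1] at h
    have hWu : IsUnit W := (hA'pd.isUnit.mul hB'pd.isUnit).mul hA'pd.isUnit
    have hW0 : W ≠ 0 := posDef_ne_zero (posDef_of_isUnit hWpsd hWu)
    have hWnorm : opNorm2 W ≤ 1 := by
      calc opNorm2 W ≤ opNorm2 (A' * B') * opNorm2 A' := opNorm2_mul_le _ _
        _ ≤ (opNorm2 A' * opNorm2 B') * opNorm2 A' :=
            mul_le_mul_of_nonneg_right (opNorm2_mul_le _ _) (opNorm2_nonneg _)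
        _ ≤ 1 * 1 * 1 := by
            have h1 := effect_opNorm_le_one heffA'
            have h2 := effect_opNorm_le_one heffB'
            gcongr <;> first | exact opNorm2_nonneg _ | positivity
        _ = 1 := by norm_num
    have heffW : IsEffect2 W := isEffect_of_norm hWpsd hWnorm
    set μ := opNorm2 W with hμ
    have hμpos : 0 < μ := opNorm2_pos hW0
    have haab : (0:ℝ) < a * a * b := by positivity
    have hABA : A * B * A = ((a * a * b : ℝ)) • W := by
      conv_lhs => rw [← smul_inv_smul₀ hpa.ne' A, ← smul_inv_smul₀ hpb.ne' B]
      rw [hW, hA', hB']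
      simp only [smul_mul_assoc, mul_smul_comm, smul_smul]
      congr 1
      ring
    have hm : opNorm2 (A * B * A) = (a * a * b) * μ := by
      rw [hABA, hμ, opNorm2_smul _ haab.le]
    have hscl : (opNorm2 (A * B * A))⁻¹ • (A * B * A) = μ⁻¹ • W := by
      rw [hm, hABA, smul_smul]
      congr 1
      field_simp
    have heffμW : IsEffect2 (μ⁻¹ • W) := isEffect_normalized hWpsd hW0
    have hφW : φ W = (μ ^ c : ℝ) • φ (μ⁻¹ • W) := by
      have h := hhom μ ⟨hμpos.le, hWnorm⟩ (μ⁻¹ • W) heffμW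
      rw [smul_inv_smul₀ hμpos.ne'] at h
      exact h
    have htriple : φ W = φ A' * φ B' * φ A' := phi_triple φ hmaps hseq heffA' heffB'
    rw [hscl, hm]
    rw [Real.mul_rpow haab.le hμpos.le, ← smul_smul, ← hφW, htriple]
    simp only [smul_mul_assoc, mul_smul_comm, smul_smul]
    congr 1
    rw [Real.mul_rpow (by positivity) hpb.le, Real.mul_rpow hpa.le hpa.le]
    ring
  · intro A hA hu
    have h0 : A ≠ 0 := by
      intro h0
      rw [h0] at hu
      exact not_isUnit_zero hu
    exact main3 A hA h0
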